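/- For every n ≥ 1, every B ∈ Matₙ(ℂ), all indices 1 ≤ i ≤ m ≤ n and 1 ≤ m′ ≤ n, and every z ∈ ℂ: det( w·I_{m′} − (φ_{m,i}(z)(B))_{(m′)} ) = det( w·I_{m′} − B_{(m′)} ) as polynomials in w. That is, the Gelfand–Zeitlin flows preserve the characteristic polynomial of every leading principal submatrix, so each flow stabilises every fiber of the Gelfand–Zeitlin map B ↦ (tr((B_{(m′)})^{i′}))_{1≤i′≤m′≤n}. -/

import Mathlib

open Matrix

noncomputable section

/-- Upper-left `m × m` submatrix of an `n × n` matrix. -/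
def ulMinor {n : ℕ} (m : ℕ) (hm : m ≤ n) (B : Matrix (Fin n) (Fin n) ℂ) :
    Matrix (Fin m) (Fin m) ℂ :=
  fun i j => B (Fin.castLE hm i) (Fin.castLE hm j)

/-- The embedding `ι_m` of `m × m` matrices into `n × n` matrices, placing the matrix in
the upper-left block and zeros elsewhere. -/
def iotaEmb {m : ℕ} (n : ℕ) (X : Matrix (Fin m) (Fin m) ℂ) : Matrix (Fin n) (Fin n) ℂ :=
  fun i j => if hi : (i : ℕ) < m then
    (if hj : (j : ℕ) < m then X ⟨i, hi⟩ ⟨j, hj⟩ else 0) else 0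

/-- The Gelfand–Zeitlin flow `φ_{m,i}(z)(B) = exp(z ι_m((B_(m))^(i-1))) B exp(-z ι_m((B_(m))^(i-1)))`. -/
def gzFlow {n : ℕ} (m i : ℕ) (hm : m ≤ n) (z : ℂ) (B : Matrix (Fin n) (Fin n) ℂ) :
    Matrix (Fin n) (Fin n) ℂ :=
  NormedSpace.exp (z • iotaEmb n ((ulMinor m hm B) ^ (i - 1))) * B *
    NormedSpace.exp ((-z) • iotaEmb n ((ulMinor m hm B) ^ (i - 1)))

/-! Write `A = ι_m((B_(m))^(i-1))` and `g = exp(z A)`, so that the flow is `g B g⁻¹`.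
For `k ≥ m` the matrix `A`, hence `g`, commutes with the projection `P_k` onto the first `k`
coordinates, i.e. `g` is block diagonal for the splitting `n = k + (n - k)`; then
`(g B g⁻¹)_(k) = g_(k) B_(k) g_(k)⁻¹` has the same characteristic polynomial as `B_(k)`.
For `k ≤ m` the `k`-th minor is a minor of the `m`-th one, which is unchanged: `A` commutes with
`ι_m(B_(m))`, so `g_(m)` commutes with `B_(m)`. -/

namespace GelfandZeitlin

theorem sum_eq_sum_castLE_of_eq_zero {M : Type*} [AddCommMonoid M] {n k : ℕ} (hk : k ≤ n)
    {f : Fin n → M} (hf : ∀ l : Fin n, k ≤ (l : ℕ) → f l = 0) :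
    ∑ l, f l = ∑ l : Fin k, f (Fin.castLE hk l) :=
  (Fintype.sum_of_injective _ (Fin.castLE_injective hk) _ _
    (fun l hl => hf l (by by_contra! hlt; exact hl ⟨⟨l, hlt⟩, rfl⟩)) fun _ => rfl).symm

def leadingProj (n k : ℕ) : Matrix (Fin n) (Fin n) ℂ :=
  diagonal fun i => if (i : ℕ) < k then 1 else 0

theorem eq_zero_of_commute_leadingProj {n k : ℕ} {U : Matrix (Fin n) (Fin n) ℂ}
    (hU : Commute U (leadingProj n k)) {i j : Fin n}
    (hij : (i : ℕ) < k ∧ k ≤ (j : ℕ) ∨ k ≤ (i : ℕ) ∧ (j : ℕ) < k) : U i j = 0 := by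
  have h := congrFun (congrFun hU.eq i) j
  simp only [leadingProj, mul_diagonal, diagonal_mul] at h
  split_ifs at h <;> first | omega | simpa using h | simpa using h.symm

theorem ulMinor_mul_of_forall {n k : ℕ} (hk : k ≤ n) {U V : Matrix (Fin n) (Fin n) ℂ}
    (h : ∀ (i j : Fin k) (l : Fin n), k ≤ (l : ℕ) →
      U (Fin.castLE hk i) l * V l (Fin.castLE hk j) = 0) :
    ulMinor k hk (U * V) = ulMinor k hk U * ulMinor k hk V := by
  ext i j
  exact sum_eq_sum_castLE_of_eq_zero hk (h i j)

theorem ulMinor_mul_of_commute_left {n k : ℕ} (hk : k ≤ n) {U : Matrix (Fin n) (Fin n) ℂ}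
    (hU : Commute U (leadingProj n k)) (V : Matrix (Fin n) (Fin n) ℂ) :
    ulMinor k hk (U * V) = ulMinor k hk U * ulMinor k hk V :=
  ulMinor_mul_of_forall hk fun i _ _ hl => by
    rw [eq_zero_of_commute_leadingProj hU (.inl ⟨i.2, hl⟩), zero_mul]

theorem ulMinor_mul_of_commute_right {n k : ℕ} (hk : k ≤ n) (U : Matrix (Fin n) (Fin n) ℂ)
    {V : Matrix (Fin n) (Fin n) ℂ} (hV : Commute V (leadingProj n k)) :
    ulMinor k hk (U * V) = ulMinor k hk U * ulMinor k hk V :=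
  ulMinor_mul_of_forall hk fun _ j _ hl => by
    rw [eq_zero_of_commute_leadingProj hV (.inr ⟨hl, j.2⟩), mul_zero]

theorem ulMinor_one {n k : ℕ} (hk : k ≤ n) : ulMinor k hk (1 : Matrix (Fin n) (Fin n) ℂ) = 1 :=
  submatrix_one _ (Fin.castLE_injective hk)

theorem ulMinor_ulMinor {n m k : ℕ} (hkm : k ≤ m) (hm : m ≤ n) (B : Matrix (Fin n) (Fin n) ℂ) :
    ulMinor k hkm (ulMinor m hm B) = ulMinor k (hkm.trans hm) B :=
  rfl

theorem ulMinor_iotaEmb {n m : ℕ} (hm : m ≤ n) (Y : Matrix (Fin m) (Fin m) ℂ) :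
    ulMinor m hm (iotaEmb n Y) = Y := by
  ext i j
  simp [ulMinor, iotaEmb]

theorem iotaEmb_mul {n m : ℕ} (hm : m ≤ n) (X Y : Matrix (Fin m) (Fin m) ℂ) :
    iotaEmb n X * iotaEmb n Y = iotaEmb n (X * Y) := by
  ext i j
  rw [mul_apply, sum_eq_sum_castLE_of_eq_zero hm fun l hl => by simp [iotaEmb, hl.not_gt]]
  by_cases hi : (i : ℕ) < m <;> by_cases hj : (j : ℕ) < m <;> simp [iotaEmb, hi, hj, mul_apply]

theorem commute_iotaEmb_leadingProj {n m k : ℕ} (hmk : m ≤ k) (Y : Matrix (Fin m) (Fin m) ℂ) :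
    Commute (iotaEmb n Y) (leadingProj n k) := by
  ext i j
  simp only [leadingProj, mul_diagonal, diagonal_mul, iotaEmb]
  split_ifs <;> first | (exfalso; omega) | simp

theorem Commute.iotaEmb {n m : ℕ} (hm : m ≤ n) {X Y : Matrix (Fin m) (Fin m) ℂ}
    (h : Commute X Y) : Commute (iotaEmb n X) (iotaEmb n Y) := by
  simp only [Commute, SemiconjBy, iotaEmb_mul hm, h.eq]

theorem exp_smul_mul_exp_neg_smul {n : ℕ} (z : ℂ) (A : Matrix (Fin n) (Fin n) ℂ) :
    NormedSpace.exp (z • A) * NormedSpace.exp ((-z) • A) = 1 := by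
  rw [neg_smul, Matrix.exp_neg]
  exact mul_nonsing_inv _ ((isUnit_iff_isUnit_det _).mp (isUnit_exp _))

theorem charpoly_ulMinor_conj {n k : ℕ} (hk : k ≤ n) {g g' : Matrix (Fin n) (Fin n) ℂ}
    (hg : Commute g (leadingProj n k)) (hg' : Commute g' (leadingProj n k)) (hgg' : g * g' = 1)
    (B : Matrix (Fin n) (Fin n) ℂ) :
    (ulMinor k hk (g * B * g')).charpoly = (ulMinor k hk B).charpoly := by
  have hG : ulMinor k hk g' * ulMinor k hk g = 1 := by
    rw [mul_eq_one_comm, ← ulMinor_mul_of_commute_left hk hg, hgg', ulMinor_one]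
  rw [ulMinor_mul_of_commute_right hk _ hg', ulMinor_mul_of_commute_left hk hg,
    charpoly_mul_comm, ← mul_assoc, hG, one_mul]

theorem ulMinor_conj_eq_of_commute {n m : ℕ} (hm : m ≤ n) {g g' B : Matrix (Fin n) (Fin n) ℂ}
    (hg : Commute g (leadingProj n m)) (hg' : Commute g' (leadingProj n m)) (hgg' : g * g' = 1)
    (hgB : Commute g (iotaEmb n (ulMinor m hm B))) :
    ulMinor m hm (g * B * g') = ulMinor m hm B := by
  calc ulMinor m hm (g * B * g')
      = ulMinor m hm (g * iotaEmb n (ulMinor m hm B)) * ulMinor m hm g' := by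
        rw [ulMinor_mul_of_commute_right hm _ hg', ulMinor_mul_of_commute_left hm hg,
          ulMinor_mul_of_commute_left hm hg, ulMinor_iotaEmb]
    _ = ulMinor m hm (iotaEmb n (ulMinor m hm B) * g) * ulMinor m hm g' := by rw [hgB.eq]
    _ = ulMinor m hm B * ulMinor m hm (g * g') := by
        rw [ulMinor_mul_of_commute_right hm _ hg, ulMinor_iotaEmb, mul_assoc,
          ulMinor_mul_of_commute_left hm hg]
    _ = ulMinor m hm B := by rw [hgg', ulMinor_one, mul_one]

end GelfandZeitlin

open GelfandZeitlin

theorem gz_flow_preserves_minor_charpoly_general (n : ℕ)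
    (m i : ℕ) (hm : m ≤ n)
    (m' : ℕ) (hm' : m' ≤ n)
    (z : ℂ) (B : Matrix (Fin n) (Fin n) ℂ) :
    (ulMinor m' hm' (gzFlow m i hm z B)).charpoly = (ulMinor m' hm' B).charpoly := by
  set A := iotaEmb n (ulMinor m hm B ^ (i - 1))
  have hflow : gzFlow m i hm z B =
      NormedSpace.exp (z • A) * B * NormedSpace.exp ((-z) • A) := rfl
  have hexp : ∀ (w : ℂ) (k : ℕ), m ≤ k → Commute (NormedSpace.exp (w • A)) (leadingProj n k) :=
    fun w _ hk => ((commute_iotaEmb_leadingProj hk _).smul_left w).exp_left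
  rw [hflow]
  rcases le_total m m' with hmm' | hm'm
  · exact charpoly_ulMinor_conj hm' (hexp z m' hmm') (hexp (-z) m' hmm')
      (exp_smul_mul_exp_neg_smul z A) B
  · have hAB : Commute (NormedSpace.exp (z • A)) (iotaEmb n (ulMinor m hm B)) :=
      ((((Commute.refl _).pow_left _).iotaEmb hm).smul_left z).exp_left
    rw [← ulMinor_ulMinor hm'm hm, ulMinor_conj_eq_of_commute hm (hexp z m le_rfl)
      (hexp (-z) m le_rfl) (exp_smul_mul_exp_neg_smul z A) hAB, ulMinor_ulMinor]

/-- The Gelfand–Zeitlin flows preserve the characteristic polynomial of every leading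
principal submatrix: `det(w·I_{m'} − (φ_{m,i}(z)(B))_(m')) = det(w·I_{m'} − B_(m'))` as
polynomials in `w`. -/
theorem gz_flow_preserves_minor_charpoly (n : ℕ) (hn : 1 ≤ n)
    (m i : ℕ) (hi1 : 1 ≤ i) (him : i ≤ m) (hm : m ≤ n)
    (m' : ℕ) (hm'1 : 1 ≤ m') (hm' : m' ≤ n)
    (z : ℂ) (B : Matrix (Fin n) (Fin n) ℂ) :
    (ulMinor m' hm' (gzFlow m i hm z B)).charpoly = (ulMinor m' hm' B).charpoly :=
  gz_flow_preserves_minor_charpoly_general n m i hm m' hm' z B
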